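/- Let n = 4. Every coadjoint N-orbit Ω ⊆ 𝔫* such that rk B_f = 2 and (1,3), (2,4) ∈ NSupp(f) (for some, equivalently every, f ∈ Ω) contains exactly one linear form h with Supp(h) = {(1,2), (1,3), (2,4)} or Supp(h) = {(1,3), (2,4)}; conversely, every h ∈ 𝔫* with Supp(h) equal to one of these two sets satisfies rk B_h = 2 and (1,3), (2,4) ∈ NSupp(h). -/

import Mathlib

open Matrix

/-- The Lie algebra `𝔫` of strictly upper triangular `n × n` matrices over `F`,
as a submodule of the matrix space. -/
def strictUpper (F : Type*) [Field F] (n : ℕ) : Submodule F (Matrix (Fin n) (Fin n) F) where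
  carrier := {x | ∀ i j : Fin n, j ≤ i → x i j = 0}
  add_mem' := by
    intro x y hx hy i j hij
    show x i j + y i j = 0
    rw [hx i j hij, hy i j hij, add_zero]
  zero_mem' := by intro i j _; rfl
  smul_mem' := by
    intro c x hx i j hij
    show c * x i j = 0
    rw [hx i j hij, mul_zero]

lemma mul_mem_strictUpper {F : Type*} [Field F] {n : ℕ} {x y : Matrix (Fin n) (Fin n) F}
    (hx : x ∈ strictUpper F n) (hy : y ∈ strictUpper F n) : x * y ∈ strictUpper F n := by
  intro i j hji
  rw [Matrix.mul_apply]
  refine Finset.sum_eq_zero fun k _ => ?_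
  rcases le_or_gt k i with h | h
  · rw [hx i k h, zero_mul]
  · rw [hy k j (hji.trans h.le), mul_zero]

/-- The Lie bracket (commutator) on `𝔫`, as a bilinear map. -/
def commBracket (F : Type*) [Field F] (n : ℕ) :
    strictUpper F n →ₗ[F] strictUpper F n →ₗ[F] strictUpper F n :=
  LinearMap.mk₂ F
    (fun x y => ⟨(x : Matrix (Fin n) (Fin n) F) * y - (y : Matrix (Fin n) (Fin n) F) * x,
      sub_mem (mul_mem_strictUpper x.2 y.2) (mul_mem_strictUpper y.2 x.2)⟩)
    (fun x x' y => by
      apply Subtype.ext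
      show ((x : Matrix (Fin n) (Fin n) F) + x') * y - (y : Matrix (Fin n) (Fin n) F) * (x + x')
          = ((x : Matrix (Fin n) (Fin n) F) * y - (y : Matrix (Fin n) (Fin n) F) * x)
            + ((x' : Matrix (Fin n) (Fin n) F) * y - (y : Matrix (Fin n) (Fin n) F) * x')
      noncomm_ring)
    (fun c x y => by
      apply Subtype.ext
      show (c • (x : Matrix (Fin n) (Fin n) F)) * y - (y : Matrix (Fin n) (Fin n) F) * (c • x)
          = c • ((x : Matrix (Fin n) (Fin n) F) * y - (y : Matrix (Fin n) (Fin n) F) * x)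
      rw [smul_mul_assoc, mul_smul_comm, smul_sub])
    (fun x y y' => by
      apply Subtype.ext
      show (x : Matrix (Fin n) (Fin n) F) * (y + y') - ((y : Matrix (Fin n) (Fin n) F) + y') * x
          = ((x : Matrix (Fin n) (Fin n) F) * y - (y : Matrix (Fin n) (Fin n) F) * x)
            + ((x : Matrix (Fin n) (Fin n) F) * y' - (y' : Matrix (Fin n) (Fin n) F) * x)
      noncomm_ring)
    (fun c x y => by
      apply Subtype.ext
      show (x : Matrix (Fin n) (Fin n) F) * (c • y) - (c • (y : Matrix (Fin n) (Fin n) F)) * x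
          = c • ((x : Matrix (Fin n) (Fin n) F) * y - (y : Matrix (Fin n) (Fin n) F) * x)
      rw [smul_mul_assoc, mul_smul_comm, smul_sub])

/-- The elementary matrix `E_{ij}` (with `i < j`) as an element of `𝔫`. -/
def Eelt (F : Type*) [Field F] (n : ℕ) (i j : Fin n) (h : i < j) : strictUpper F n :=
  ⟨Matrix.single i j 1, by
    intro a b hba
    refine Matrix.single_apply_of_ne (i := i) (j := j) (c := (1 : F)) (i' := a) (j' := b) ?_
    rintro ⟨rfl, rfl⟩
    exact absurd h (not_lt.mpr hba)⟩

/-- The support of a linear form `f ∈ 𝔫*`. -/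
def Supp (F : Type*) [Field F] (n : ℕ) (f : Module.Dual F (strictUpper F n)) :
    Set (Fin n × Fin n) :=
  {p | ∃ h : p.1 < p.2, f (Eelt F n p.1 p.2 h) ≠ 0}

/-- A matrix is upper unitriangular if it has `1`'s on the diagonal and
`0`'s below the diagonal. -/
def IsUnitriangular {F : Type*} [Field F] {n : ℕ} (g : Matrix (Fin n) (Fin n) F) : Prop :=
  (∀ i, g i i = 1) ∧ ∀ i j : Fin n, j < i → g i j = 0

/-- The coadjoint orbit `N·f` of a linear form `f ∈ 𝔫*`. -/
def coadjOrbit (F : Type*) [Field F] (n : ℕ) (f : Module.Dual F (strictUpper F n)) :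
    Set (Module.Dual F (strictUpper F n)) :=
  {f' | ∃ g g' : Matrix (Fin n) (Fin n) F, IsUnitriangular g ∧ IsUnitriangular g' ∧
    g * g' = 1 ∧ g' * g = 1 ∧
    ∀ (x : strictUpper F n) (hx : g' * (x : Matrix (Fin n) (Fin n) F) * g ∈ strictUpper F n),
      f' x = f ⟨g' * (x : Matrix (Fin n) (Fin n) F) * g, hx⟩}

/-- `NSupp f = ⋃_{f' ∈ N·f} Supp f'`. -/
def NSupp (F : Type*) [Field F] (n : ℕ) (f : Module.Dual F (strictUpper F n)) :
    Set (Fin n × Fin n) :=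
  {p | ∃ f' ∈ coadjOrbit F n f, p ∈ Supp F n f'}

/-- The rank of the alternating bilinear form `B_f(x, y) = f([x, y])` on `𝔫`,
i.e. the rank of the linear map `𝔫 → 𝔫*`, `x ↦ B_f(x, ·)`. -/
noncomputable def rkB (F : Type*) [Field F] (n : ℕ) (f : Module.Dual F (strictUpper F n)) : ℕ :=
  Module.finrank F (LinearMap.range (LinearMap.compr₂ (commBracket F n) f))

/-!
Write `a, b, c, d, e, k` for the values of `f` at `E₀₁, E₀₂, E₀₃, E₁₂, E₁₃, E₂₃`. In these
coordinates `B_f(x, y) = b (x₀₁y₁₂ - y₀₁x₁₂) + c (x₀₁y₁₃ + x₀₂y₂₃ - y₀₁x₁₃ - y₀₂x₂₃)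
+ e (x₁₂y₂₃ - y₁₂x₂₃)`, so `c ≠ 0` forces `rk B_f ≥ 3`, while `c = 0, b ≠ 0` gives `rk B_f = 2`.
On an orbit with `c = 0` the numbers `b`, `e` and `e a + b k` are constant, so the extensiveness
conditions say exactly `b ≠ 0` and `e ≠ 0`. Conjugating by
`1 + (d / b) E₀₁ + (k / e) E₁₂` kills `d` and `k`, and the invariant `e a + b k` then determines
the remaining coordinate `a`, which gives uniqueness.
-/

lemma Matrix.mul_single_mul_apply {l m n o R : Type*} [Fintype m] [Fintype n] [DecidableEq m]
    [DecidableEq n] [Semiring R] (A : Matrix l m R) (B : Matrix n o R) (i : m) (j : n) (a : l)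
    (b : o) (c : R) :
    (A * Matrix.single i j c * B) a b = A a i * c * B j b := by
  rw [Matrix.mul_apply, Finset.sum_eq_single j (fun m _ hm => by simp [hm]) (by simp),
    Matrix.mul_single_apply_same]

section General

variable {F : Type*} [Field F] {n : ℕ}

@[simp]
lemma coe_Eelt (i j : Fin n) (h : i < j) :
    (Eelt F n i j h : Matrix (Fin n) (Fin n) F) = Matrix.single i j 1 :=
  rfl

lemma IsUnitriangular.one : IsUnitriangular (1 : Matrix (Fin n) (Fin n) F) :=
  ⟨fun i => Matrix.one_apply_eq i, fun _ _ h => Matrix.one_apply_ne h.ne'⟩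

lemma IsUnitriangular.mul_mem_strictUpper_left {g x : Matrix (Fin n) (Fin n) F}
    (hg : IsUnitriangular g) (hx : x ∈ strictUpper F n) : g * x ∈ strictUpper F n := by
  intro i j hji
  rw [Matrix.mul_apply]
  refine Finset.sum_eq_zero fun k _ => ?_
  rcases lt_or_ge k i with h | h
  · rw [hg.2 i k h, zero_mul]
  · rw [hx k j (hji.trans h), mul_zero]

lemma IsUnitriangular.mul_mem_strictUpper_right {g x : Matrix (Fin n) (Fin n) F}
    (hg : IsUnitriangular g) (hx : x ∈ strictUpper F n) : x * g ∈ strictUpper F n := by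
  intro i j hji
  rw [Matrix.mul_apply]
  refine Finset.sum_eq_zero fun k _ => ?_
  rcases le_or_gt k i with h | h
  · rw [hx i k h, zero_mul]
  · rw [hg.2 k j (hji.trans_lt h), mul_zero]

lemma IsUnitriangular.conj_mem_strictUpper {g g' x : Matrix (Fin n) (Fin n) F}
    (hg : IsUnitriangular g) (hg' : IsUnitriangular g') (hx : x ∈ strictUpper F n) :
    g' * x * g ∈ strictUpper F n :=
  hg.mul_mem_strictUpper_right (hg'.mul_mem_strictUpper_left hx)

def conjLinear {g g' : Matrix (Fin n) (Fin n) F} (hg : IsUnitriangular g)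
    (hg' : IsUnitriangular g') : strictUpper F n →ₗ[F] strictUpper F n where
  toFun x := ⟨g' * x * g, hg.conj_mem_strictUpper hg' x.2⟩
  map_add' x y := Subtype.ext (by simp [Matrix.mul_add, Matrix.add_mul])
  map_smul' c x := Subtype.ext (by simp)

@[simp]
lemma conjLinear_apply {g g' : Matrix (Fin n) (Fin n) F} (hg : IsUnitriangular g)
    (hg' : IsUnitriangular g') (x : strictUpper F n) :
    conjLinear hg hg' x = ⟨g' * x * g, hg.conj_mem_strictUpper hg' x.2⟩ :=
  rfl

lemma comp_conjLinear_mem_coadjOrbit {g g' : Matrix (Fin n) (Fin n) F}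
    (hg : IsUnitriangular g) (hg' : IsUnitriangular g') (h₁ : g * g' = 1) (h₂ : g' * g = 1)
    (f : Module.Dual F (strictUpper F n)) : f ∘ₗ conjLinear hg hg' ∈ coadjOrbit F n f :=
  ⟨g, g', hg, hg', h₁, h₂, fun _ _ => rfl⟩

lemma self_mem_coadjOrbit (f : Module.Dual F (strictUpper F n)) : f ∈ coadjOrbit F n f :=
  ⟨1, 1, .one, .one, one_mul 1, one_mul 1, fun x _ => by simp⟩

lemma Supp_subset_NSupp (f : Module.Dual F (strictUpper F n)) : Supp F n f ⊆ NSupp F n f :=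
  fun _ hp => ⟨f, self_mem_coadjOrbit f, hp⟩

lemma Supp_eq_iff {f : Module.Dual F (strictUpper F n)} {S : Set (Fin n × Fin n)}
    (hS : ∀ p ∈ S, p.1 < p.2) :
    Supp F n f = S ↔ ∀ i j (h : i < j), (f (Eelt F n i j h) ≠ 0 ↔ (i, j) ∈ S) := by
  refine ⟨fun hf i j h => ?_, fun hf => Set.ext fun ⟨i, j⟩ => ?_⟩
  · rw [← hf]
    exact ⟨fun hne => ⟨h, hne⟩, fun ⟨_, hne⟩ => hne⟩
  · exact ⟨fun ⟨h, hne⟩ => (hf i j h).1 hne, fun hp => ⟨hS _ hp, (hf i j (hS _ hp)).2 hp⟩⟩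

end General

section Four

variable {F : Type*} [Field F]

local notation "E₀₁" => Eelt F 4 0 1 (by decide)
local notation "E₀₂" => Eelt F 4 0 2 (by decide)
local notation "E₀₃" => Eelt F 4 0 3 (by decide)
local notation "E₁₂" => Eelt F 4 1 2 (by decide)
local notation "E₁₃" => Eelt F 4 1 3 (by decide)
local notation "E₂₃" => Eelt F 4 2 3 (by decide)

lemma strictUpper_four_eq (x : strictUpper F 4) :
    x = x.1 0 1 • E₀₁ + x.1 0 2 • E₀₂ + x.1 0 3 • E₀₃ + x.1 1 2 • E₁₂ + x.1 1 3 • E₁₃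
      + x.1 2 3 • E₂₃ := by
  have hx (i j : Fin 4) (h : j ≤ i := by decide) : x.1 i j = 0 := x.2 i j h
  ext i j
  fin_cases i <;> fin_cases j <;> simp [hx]

lemma dual_four_apply (f : Module.Dual F (strictUpper F 4)) (x : strictUpper F 4) :
    f x = x.1 0 1 * f E₀₁ + x.1 0 2 * f E₀₂ + x.1 0 3 * f E₀₃ + x.1 1 2 * f E₁₂
      + x.1 1 3 * f E₁₃ + x.1 2 3 * f E₂₃ := by
  conv_lhs => rw [strictUpper_four_eq x]
  simp only [map_add, map_smul, smul_eq_mul]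

lemma dual_four_ext {f f' : Module.Dual F (strictUpper F 4)}
    (h₀₁ : f E₀₁ = f' E₀₁) (h₀₂ : f E₀₂ = f' E₀₂) (h₀₃ : f E₀₃ = f' E₀₃) (h₁₂ : f E₁₂ = f' E₁₂)
    (h₁₃ : f E₁₃ = f' E₁₃) (h₂₃ : f E₂₃ = f' E₂₃) : f = f' :=
  LinearMap.ext fun x => by
    rw [dual_four_apply f, dual_four_apply f', h₀₁, h₀₂, h₀₃, h₁₂, h₁₃, h₂₃]

lemma dual_four_commBracket (f : Module.Dual F (strictUpper F 4)) (x y : strictUpper F 4) :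
    f (commBracket F 4 x y) =
      f E₀₂ * (x.1 0 1 * y.1 1 2 - y.1 0 1 * x.1 1 2)
      + f E₀₃ * (x.1 0 1 * y.1 1 3 + x.1 0 2 * y.1 2 3 - y.1 0 1 * x.1 1 3 - y.1 0 2 * x.1 2 3)
      + f E₁₃ * (x.1 1 2 * y.1 2 3 - y.1 1 2 * x.1 2 3) := by
  have hx (i j : Fin 4) (h : j ≤ i := by decide) : x.1 i j = 0 := x.2 i j h
  have hy (i j : Fin 4) (h : j ≤ i := by decide) : y.1 i j = 0 := y.2 i j h
  rw [dual_four_apply]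
  simp [commBracket, Matrix.mul_apply, Fin.sum_univ_four, hx, hy]
  ring

lemma dual_four_apply_conj (f : Module.Dual F (strictUpper F 4))
    (g g' : Matrix (Fin 4) (Fin 4) F) (i j : Fin 4)
    (hx : g' * Matrix.single i j 1 * g ∈ strictUpper F 4) :
    f ⟨g' * Matrix.single i j 1 * g, hx⟩ =
      g' 0 i * g j 1 * f E₀₁ + g' 0 i * g j 2 * f E₀₂ + g' 0 i * g j 3 * f E₀₃
        + g' 1 i * g j 2 * f E₁₂ + g' 1 i * g j 3 * f E₁₃ + g' 2 i * g j 3 * f E₂₃ := by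
  rw [dual_four_apply]
  simp [Matrix.mul_single_mul_apply]

lemma exists_of_mem_coadjOrbit_four {f f' : Module.Dual F (strictUpper F 4)}
    (hf' : f' ∈ coadjOrbit F 4 f) : ∃ s t u v w : F,
      f' E₀₁ = f E₀₁ + s * f E₀₂ + t * f E₀₃ ∧ f' E₀₂ = f E₀₂ + u * f E₀₃ ∧
      f' E₀₃ = f E₀₃ ∧ f' E₁₃ = f E₁₃ + v * f E₀₃ ∧ f' E₂₃ = f E₂₃ - s * f E₁₃ + w * f E₀₃ := by
  obtain ⟨g, g', hg, hg', hgg', -, hf'⟩ := hf'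
  have hval (i j : Fin 4) (h : i < j) :=
    (hf' _ (hg.conj_mem_strictUpper hg' (Eelt F 4 i j h).2)).trans
      (dual_four_apply_conj f g g' i j _)
  have hinv : g 1 2 + g' 1 2 = 0 := by
    have := congrFun (congrFun hgg' 1) 2
    simp [Matrix.mul_apply, Fin.sum_univ_four, hg.1, hg'.1, hg.2, hg'.2] at this
    linear_combination this
  refine ⟨g 1 2, g 1 3, g 2 3, g' 0 1, g' 0 2, ?_, ?_, ?_, ?_, ?_⟩
  all_goals simp [hval, hg.1, hg'.1, hg.2, hg'.2]
  · ring
  · linear_combination f E₁₃ * hinv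

lemma coadjOrbit_four_invariants {f f' : Module.Dual F (strictUpper F 4)}
    (hf' : f' ∈ coadjOrbit F 4 f) (hc : f E₀₃ = 0) :
    f' E₀₂ = f E₀₂ ∧ f' E₀₃ = 0 ∧ f' E₁₃ = f E₁₃ ∧
      f E₁₃ * f' E₀₁ + f E₀₂ * f' E₂₃ = f E₁₃ * f E₀₁ + f E₀₂ * f E₂₃ := by
  obtain ⟨s, _, _, _, _, h₀₁, h₀₂, h₀₃, h₁₃, h₂₃⟩ := exists_of_mem_coadjOrbit_four hf'
  simp only [hc, mul_zero, add_zero] at h₀₁ h₀₂ h₀₃ h₁₃ h₂₃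
  exact ⟨h₀₂, h₀₃, h₁₃, by rw [h₀₁, h₂₃]; ring⟩

lemma ne_zero_of_mem_NSupp_four {f : Module.Dual F (strictUpper F 4)} (hc : f E₀₃ = 0)
    (h₀₂ : (0, 2) ∈ NSupp F 4 f) (h₁₃ : (1, 3) ∈ NSupp F 4 f) : f E₀₂ ≠ 0 ∧ f E₁₃ ≠ 0 := by
  obtain ⟨f₁, hf₁, _, hne₁⟩ := h₀₂
  obtain ⟨f₂, hf₂, _, hne₂⟩ := h₁₃
  exact ⟨(coadjOrbit_four_invariants hf₁ hc).1 ▸ hne₁,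
    (coadjOrbit_four_invariants hf₂ hc).2.2.1 ▸ hne₂⟩

lemma three_le_rkB_four {f : Module.Dual F (strictUpper F 4)} (hc : f E₀₃ ≠ 0) :
    3 ≤ rkB F 4 f := by
  set L := (commBracket F 4).compr₂ f
  have hL : LinearIndependent F ![L E₀₂, L E₁₃, L E₂₃] := by
    rw [Fintype.linearIndependent_iff]
    intro a ha
    -- pairing with `E₂₃, E₀₁, E₀₂` gives `c` times a diagonal sign matrix
    have h₁ := LinearMap.congr_fun ha E₂₃
    have h₂ := LinearMap.congr_fun ha E₀₁
    have h₃ := LinearMap.congr_fun ha E₀₂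
    simp [Fin.sum_univ_three, L, dual_four_commBracket, hc] at h₁ h₂ h₃
    intro i
    fin_cases i <;> assumption
  calc 3 = Module.finrank F (Submodule.span F (Set.range ![L E₀₂, L E₁₃, L E₂₃])) := by
        simp [finrank_span_eq_card hL]
    _ ≤ rkB F 4 f := Submodule.finrank_mono <| Submodule.span_le.2 <| by
        rintro _ ⟨i, rfl⟩
        fin_cases i <;> exact LinearMap.mem_range_self _ _

lemma apply_Eelt_zero_three_eq_zero_of_rkB_eq_two {f : Module.Dual F (strictUpper F 4)}
    (hf : rkB F 4 f = 2) : f E₀₃ = 0 :=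
  not_not.1 fun hc => by
    have := three_le_rkB_four hc
    omega

lemma rkB_four_eq_two {f : Module.Dual F (strictUpper F 4)} (hc : f E₀₃ = 0) (hb : f E₀₂ ≠ 0) :
    rkB F 4 f = 2 := by
  set L := (commBracket F 4).compr₂ f
  have hL : LinearIndependent F ![L E₀₁, L E₁₂] := by
    refine LinearIndependent.pair_iff.2 fun s t hst => ?_
    have h₁ := LinearMap.congr_fun hst E₁₂
    have h₂ := LinearMap.congr_fun hst E₀₁
    simp [L, dual_four_commBracket, hb] at h₁ h₂
    exact ⟨h₁, h₂⟩
  have hrange : LinearMap.range L = Submodule.span F (Set.range ![L E₀₁, L E₁₂]) := by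
    refine le_antisymm ?_ (Submodule.span_le.2 ?_)
    · rintro _ ⟨x, rfl⟩
      have hx : L x = (x.1 0 1 - f E₁₃ / f E₀₂ * x.1 2 3) • L E₀₁ + x.1 1 2 • L E₁₂ := by
        ext y
        simp [L, dual_four_commBracket, hc]
        field_simp
        ring
      rw [hx]
      exact add_mem (Submodule.smul_mem _ _ (Submodule.subset_span ⟨0, rfl⟩))
        (Submodule.smul_mem _ _ (Submodule.subset_span ⟨1, rfl⟩))
    · rintro _ ⟨i, rfl⟩
      fin_cases i <;> exact LinearMap.mem_range_self _ _
  show Module.finrank F (LinearMap.range L) = 2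
  rw [hrange, finrank_span_eq_card hL]
  rfl

lemma exists_mem_coadjOrbit_four_apply_eq_zero {f : Module.Dual F (strictUpper F 4)}
    (hc : f E₀₃ = 0) (hb : f E₀₂ ≠ 0) (he : f E₁₃ ≠ 0) :
    ∃ h ∈ coadjOrbit F 4 f, h E₁₂ = 0 ∧ h E₂₃ = 0 := by
  obtain ⟨p, hp⟩ : ∃ p, p * f E₀₂ = f E₁₂ := ⟨f E₁₂ / f E₀₂, div_mul_cancel₀ _ hb⟩
  obtain ⟨q, hq⟩ : ∃ q, q * f E₁₃ = f E₂₃ := ⟨f E₂₃ / f E₁₃, div_mul_cancel₀ _ he⟩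
  let g : Matrix (Fin 4) (Fin 4) F := !![1, p, 0, 0; 0, 1, q, 0; 0, 0, 1, 0; 0, 0, 0, 1]
  let g' : Matrix (Fin 4) (Fin 4) F := !![1, -p, p * q, 0; 0, 1, -q, 0; 0, 0, 1, 0; 0, 0, 0, 1]
  have hg : IsUnitriangular g := by
    refine ⟨fun i => ?_, fun i j hij => ?_⟩
    · fin_cases i <;> rfl
    · fin_cases i <;> fin_cases j <;> first | rfl | exact absurd hij (by decide)
  have hg' : IsUnitriangular g' := by
    refine ⟨fun i => ?_, fun i j hij => ?_⟩
    · fin_cases i <;> rfl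
    · fin_cases i <;> fin_cases j <;> first | rfl | exact absurd hij (by decide)
  have hgg' : g * g' = 1 := by
    ext i j
    fin_cases i <;> fin_cases j <;> simp [g, g', Matrix.mul_apply, Fin.sum_univ_four]
  have hg'g : g' * g = 1 := by
    ext i j
    fin_cases i <;> fin_cases j <;> simp [g, g', Matrix.mul_apply, Fin.sum_univ_four]
  refine ⟨f ∘ₗ conjLinear hg hg', comp_conjLinear_mem_coadjOrbit hg hg' hgg' hg'g f, ?_, ?_⟩
  · simp only [LinearMap.comp_apply, conjLinear_apply, coe_Eelt, dual_four_apply_conj]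
    simp [g, g', hp]
  · simp only [LinearMap.comp_apply, conjLinear_apply, coe_Eelt, dual_four_apply_conj]
    simp [g, g', hc, hq]

lemma Supp_four_eq_or_eq_iff {f : Module.Dual F (strictUpper F 4)} :
    (Supp F 4 f = {(0, 1), (0, 2), (1, 3)} ∨ Supp F 4 f = {(0, 2), (1, 3)}) ↔
      f E₀₂ ≠ 0 ∧ f E₁₃ ≠ 0 ∧ f E₀₃ = 0 ∧ f E₁₂ = 0 ∧ f E₂₃ = 0 := by
  rw [Supp_eq_iff (by simp), Supp_eq_iff (by simp)]
  simp [Fin.forall_fin_succ]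
  tauto

lemma existsUnique_mem_coadjOrbit_four {f : Module.Dual F (strictUpper F 4)}
    (hc : f E₀₃ = 0) (hb : f E₀₂ ≠ 0) (he : f E₁₃ ≠ 0) :
    ∃! h, h ∈ coadjOrbit F 4 f ∧
      (Supp F 4 h = {(0, 1), (0, 2), (1, 3)} ∨ Supp F 4 h = {(0, 2), (1, 3)}) := by
  simp only [Supp_four_eq_or_eq_iff]
  obtain ⟨h, hh, h₁₂, h₂₃⟩ := exists_mem_coadjOrbit_four_apply_eq_zero hc hb he
  obtain ⟨h₀₂, h₀₃, h₁₃, hinv⟩ := coadjOrbit_four_invariants hh hc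
  refine ⟨h, ⟨hh, h₀₂ ▸ hb, h₁₃ ▸ he, h₀₃, h₁₂, h₂₃⟩, fun h' ⟨hh', _, _, _, h'₁₂, h'₂₃⟩ => ?_⟩
  obtain ⟨h'₀₂, h'₀₃, h'₁₃, hinv'⟩ := coadjOrbit_four_invariants hh' hc
  refine dual_four_ext (mul_left_cancel₀ he ?_) (h'₀₂.trans h₀₂.symm) (h'₀₃.trans h₀₃.symm)
    (h'₁₂.trans h₁₂.symm) (h'₁₃.trans h₁₃.symm) (h'₂₃.trans h₂₃.symm)
  rw [h₂₃] at hinv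
  rw [h'₂₃] at hinv'
  linear_combination hinv' - hinv

end Four

theorem dim_two_extensive_orbits_n4_general (F : Type*) [Field F] :
    (∀ f : Module.Dual F (strictUpper F 4), rkB F 4 f = 2 →
      (((0 : Fin 4), (2 : Fin 4)) ∈ NSupp F 4 f) →
      (((1 : Fin 4), (3 : Fin 4)) ∈ NSupp F 4 f) →
      ∃! h : Module.Dual F (strictUpper F 4), h ∈ coadjOrbit F 4 f ∧
        (Supp F 4 h = {((0 : Fin 4), (1 : Fin 4)), ((0 : Fin 4), (2 : Fin 4)),
            ((1 : Fin 4), (3 : Fin 4))} ∨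
         Supp F 4 h = {((0 : Fin 4), (2 : Fin 4)), ((1 : Fin 4), (3 : Fin 4))})) ∧
    (∀ h : Module.Dual F (strictUpper F 4),
      (Supp F 4 h = {((0 : Fin 4), (1 : Fin 4)), ((0 : Fin 4), (2 : Fin 4)),
          ((1 : Fin 4), (3 : Fin 4))} ∨
       Supp F 4 h = {((0 : Fin 4), (2 : Fin 4)), ((1 : Fin 4), (3 : Fin 4))}) →
      rkB F 4 h = 2 ∧ (((0 : Fin 4), (2 : Fin 4)) ∈ NSupp F 4 h) ∧
        (((1 : Fin 4), (3 : Fin 4)) ∈ NSupp F 4 h)) := by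
  refine ⟨fun f hrk h₀₂ h₁₃ => ?_, fun h hS => ?_⟩
  · have hc := apply_Eelt_zero_three_eq_zero_of_rkB_eq_two hrk
    obtain ⟨hb, he⟩ := ne_zero_of_mem_NSupp_four hc h₀₂ h₁₃
    exact existsUnique_mem_coadjOrbit_four hc hb he
  · obtain ⟨hb, he, hc, -⟩ := Supp_four_eq_or_eq_iff.1 hS
    exact ⟨rkB_four_eq_two hc hb, Supp_subset_NSupp h ⟨by decide, hb⟩,
      Supp_subset_NSupp h ⟨by decide, he⟩⟩

/-- `n = 4`: every coadjoint orbit of dimension 2 which is extensive for `A₃`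
(i.e. `(1,3), (2,4) ∈ NSupp f`, written 0-based as `(0,2), (1,3)`) contains exactly one
linear form `h` with `Supp h = {(1,2), (1,3), (2,4)}` or `Supp h = {(1,3), (2,4)}`
(0-based: `{(0,1), (0,2), (1,3)}` or `{(0,2), (1,3)}`); conversely, every `h` with such
support has `rk B_h = 2` and `(1,3), (2,4) ∈ NSupp h`. -/
theorem dim_two_extensive_orbits_n4 (F : Type*) [Field F] [IsAlgClosed F] [CharZero F] :
    (∀ f : Module.Dual F (strictUpper F 4), rkB F 4 f = 2 →
      (((0 : Fin 4), (2 : Fin 4)) ∈ NSupp F 4 f) →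
      (((1 : Fin 4), (3 : Fin 4)) ∈ NSupp F 4 f) →
      ∃! h : Module.Dual F (strictUpper F 4), h ∈ coadjOrbit F 4 f ∧
        (Supp F 4 h = {((0 : Fin 4), (1 : Fin 4)), ((0 : Fin 4), (2 : Fin 4)),
            ((1 : Fin 4), (3 : Fin 4))} ∨
         Supp F 4 h = {((0 : Fin 4), (2 : Fin 4)), ((1 : Fin 4), (3 : Fin 4))})) ∧
    (∀ h : Module.Dual F (strictUpper F 4),
      (Supp F 4 h = {((0 : Fin 4), (1 : Fin 4)), ((0 : Fin 4), (2 : Fin 4)),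
          ((1 : Fin 4), (3 : Fin 4))} ∨
       Supp F 4 h = {((0 : Fin 4), (2 : Fin 4)), ((1 : Fin 4), (3 : Fin 4))}) →
      rkB F 4 h = 2 ∧ (((0 : Fin 4), (2 : Fin 4)) ∈ NSupp F 4 h) ∧
        (((1 : Fin 4), (3 : Fin 4)) ∈ NSupp F 4 h)) :=
  dim_two_extensive_orbits_n4_general F
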